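/- arXiv:2210.00205 — 3 statements merged into one kernel-verified Lean document; each statement's English description precedes it below -/
import Mathlib

section
/- Let X be a Hausdorff space with a fixed-point free continuous involution τ : X → X and let Y be a Hausdorff space. The triple ((X,τ);Y) does NOT satisfy the Borsuk–Ulam property if and only if there exists a continuous map φ : X → F(Y,2) that is equivariant with respect to τ and the swap involution τ₂ (i.e. φ(τ(x)) = τ₂(φ(x)) for all x ∈ X), so that φ induces a continuous map φ̄ : X/τ → D(Y,2) on quotients making the square q^Y ∘ φ = φ̄ ∘ q commute. -/
open Metric Set

/-- A continuous local section of `p` over `U`. -/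
def IsLocalSection {E B : Type*} [TopologicalSpace E] [TopologicalSpace B]
    (p : E → B) (U : Set B) : Prop :=
  ∃ s : U → E, Continuous s ∧ ∀ x : U, p (s x) = (x : B)

/-- The sectional category of a map `p : E → B`: the least number of open sets covering `B`,
over each of which `p` admits a continuous local section; `⊤` if no finite cover exists. -/
noncomputable def secat {E B : Type*} [TopologicalSpace E] [TopologicalSpace B]
    (p : E → B) : ℕ∞ :=
  sInf {n : ℕ∞ | ∃ k : ℕ, n = (k : ℕ∞) ∧ ∃ U : Fin k → Set B,
    (∀ i, IsOpen (U i)) ∧ (⋃ i, U i) = Set.univ ∧ ∀ i, IsLocalSection p (U i)}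

/-- A subset is contractible within the ambient space if its inclusion is nullhomotopic. -/
def ContractibleIn {X : Type*} [TopologicalSpace X] (U : Set X) : Prop :=
  ContinuousMap.Nullhomotopic (⟨(Subtype.val : U → X), continuous_subtype_val⟩ : C(U, X))

/-- Lusternik–Schnirelmann category: least number of open sets covering `X`, each
contractible within `X`. -/
noncomputable def LScat (X : Type*) [TopologicalSpace X] : ℕ∞ :=
  sInf {n : ℕ∞ | ∃ k : ℕ, n = (k : ℕ∞) ∧ ∃ U : Fin k → Set X,
    (∀ i, IsOpen (U i)) ∧ (⋃ i, U i) = Set.univ ∧ ∀ i, ContractibleIn (U i)}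

/-- Hurewicz fibration: the homotopy lifting property with respect to all spaces. -/
def IsHurewiczFibration {E B : Type*} [TopologicalSpace E] [TopologicalSpace B]
    (p : E → B) : Prop :=
  ∀ (Z : Type*) [TopologicalSpace Z] (H : Z × unitInterval → B) (h : Z → E),
    Continuous H → Continuous h → (∀ z, p (h z) = H (z, 0)) →
    ∃ G : Z × unitInterval → E, Continuous G ∧ (∀ z, G (z, 0) = h z) ∧ ∀ w, p (G w) = H w

/-- The orbit relation of the action generated by a map `τ`. -/
def orbitRelOf {X : Type*} (τ : X → X) : X → X → Prop := fun x y => y = τ x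

/-- Quotient of `X` by the (involutive) map `τ`, with the quotient topology. -/
abbrev InvolQuot {X : Type*} [TopologicalSpace X] (τ : X → X) : Type _ := Quot (orbitRelOf τ)

/-- The quotient map `X → X/τ`. -/
def involQuotMk {X : Type*} [TopologicalSpace X] (τ : X → X) : X → InvolQuot τ :=
  Quot.mk (orbitRelOf τ)

/-- The ordered configuration space `F(Y,2)` of two distinct points of `Y`. -/
abbrev Conf2 (Y : Type*) [TopologicalSpace Y] : Type _ := {p : Y × Y // p.1 ≠ p.2}

/-- The swap involution `τ₂` on `F(Y,2)`. -/
def confSwap {Y : Type*} [TopologicalSpace Y] : Conf2 Y → Conf2 Y :=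
  fun p => ⟨(p.1.2, p.1.1), Ne.symm p.2⟩

/-- The unordered configuration space `D(Y,2) = F(Y,2)/τ₂`. -/
abbrev UConf2 (Y : Type*) [TopologicalSpace Y] : Type _ := InvolQuot (confSwap (Y := Y))

/-- The quotient double covering `q^Y : F(Y,2) → D(Y,2)`. -/
def confQuotMk (Y : Type*) [TopologicalSpace Y] : Conf2 Y → UConf2 Y :=
  involQuotMk confSwap

/-- The Borsuk–Ulam property for the triple `((X,τ);Y)`. -/
def BorsukUlamProperty (X : Type*) [TopologicalSpace X] (τ : X → X)
    (Y : Type*) [TopologicalSpace Y] : Prop :=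
  ∀ f : X → Y, Continuous f → ∃ x : X, f (τ x) = f x

/-- The `m`-sphere as the unit sphere of `ℝ^{m+1}`. -/
abbrev Sph (m : ℕ) : Type := Metric.sphere (0 : EuclideanSpace ℝ (Fin (m + 1))) 1

/-- The antipodal involution on the sphere. -/
noncomputable def antipodal (m : ℕ) : Sph m → Sph m := fun x => -x

/-- The smallest dimension of a Euclidean space into which `Y` embeds. -/
noncomputable def embDim (Y : Type*) [TopologicalSpace Y] : ℕ∞ :=
  sInf {n : ℕ∞ | ∃ k : ℕ, n = (k : ℕ∞) ∧
    ∃ e : Y → EuclideanSpace ℝ (Fin k), Topology.IsEmbedding e}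

/-- The `ℤ/2`-index of `(X,τ)`: the least `n` such that there is a continuous map
`X → Sⁿ` which is equivariant for `τ` and the antipodal involution. -/
noncomputable def z2Index {X : Type*} [TopologicalSpace X] (τ : X → X) : ℕ∞ :=
  sInf {n : ℕ∞ | ∃ k : ℕ, n = (k : ℕ∞) ∧
    ∃ g : X → Sph k, Continuous g ∧ ∀ x, g (τ x) = antipodal k (g x)}

section CW

/-- A (classical) CW-complex structure on a Hausdorff space `X`: a family of cells
with characteristic maps from closed disks, the images of the open disks partitioning `X`,
each attaching map sending the boundary sphere into cells of lower dimension, together with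
closure finiteness (C) and the weak topology (W). -/
structure CWStructure (X : Type u) [TopologicalSpace X] : Type (u + 1) where
  /-- index type of the `n`-cells -/
  cell : ℕ → Type u
  /-- characteristic map of each `n`-cell -/
  map : (n : ℕ) → cell n → EuclideanSpace ℝ (Fin n) → X
  continuousOn : ∀ n i, ContinuousOn (map n i) (closedBall 0 1)
  injOn : ∀ n i, Set.InjOn (map n i) (ball 0 1)
  partition : ∀ x : X, ∃! p : Σ n, cell n, x ∈ map p.1 p.2 '' ball 0 1
  mapsTo_boundary : ∀ n i, Set.MapsTo (map n i) (sphere 0 1)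
    (⋃ (m : ℕ) (_ : m < n) (j : cell m), map m j '' closedBall 0 1)
  closureFinite : ∀ n i, {p : Σ m, cell m |
    (map p.1 p.2 '' ball 0 1 ∩ map n i '' closedBall 0 1).Nonempty}.Finite
  weakTopology : ∀ A : Set X,
    (∀ n i, IsClosed (A ∩ map n i '' closedBall 0 1)) → IsClosed A

namespace CWStructure

variable {X : Type u} [TopologicalSpace X] (S : CWStructure X)

/-- The `n`-skeleton of a CW structure. -/
def skeleton (n : ℕ) : Set X :=
  ⋃ (m : ℕ) (_ : m ≤ n) (j : S.cell m), S.map m j '' closedBall 0 1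

/-- The CW structure has dimension at most `d`. -/
def DimLE (d : ℕ) : Prop := ∀ n, d < n → IsEmpty (S.cell n)

/-- The CW structure has dimension exactly `d`. -/
def DimEq (d : ℕ) : Prop := S.DimLE d ∧ Nonempty (S.cell d)

/-- A self-map is cellular if it maps each skeleton into itself. -/
def Cellular (f : X → X) : Prop := ∀ n, Set.MapsTo f (S.skeleton n) (S.skeleton n)

end CWStructure

/-- The homotopical dimension of `X` is at most `d`: `X` is homotopy equivalent to a
CW complex of dimension at most `d`. -/
def HDimLE (X : Type u) [TopologicalSpace X] (d : ℕ) : Prop :=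
  ∃ (Z : Type u) (_ : TopologicalSpace Z) (S : CWStructure Z),
    S.DimLE d ∧ Nonempty (ContinuousMap.HomotopyEquiv Z X)

end CW

/-- topological characterisation of failure of the Borsuk–Ulam property. -/
theorem stmt_0 {X Y : Type*} [TopologicalSpace X] [TopologicalSpace Y]
    [T2Space X] [T2Space Y] (τ : X → X) (hτc : Continuous τ)
    (hτinv : Function.Involutive τ) (hτfree : ∀ x, τ x ≠ x) :
    ¬ BorsukUlamProperty X τ Y ↔
      ∃ φ : X → Conf2 Y, Continuous φ ∧ (∀ x, φ (τ x) = confSwap (φ x)) ∧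
        ∃ φbar : InvolQuot τ → UConf2 Y, Continuous φbar ∧
          ∀ x : X, confQuotMk Y (φ x) = φbar (involQuotMk τ x) := by
  constructor
  · intro h
    rw [BorsukUlamProperty] at h
    push_neg at h
    obtain ⟨f, hf, hne⟩ := h
    refine ⟨fun x => ⟨(f x, f (τ x)), fun hx => hne x hx.symm⟩,
      (hf.prodMk (hf.comp hτc)).subtype_mk _, ?_, ?_⟩
    · intro x
      simp only [confSwap]
      congr 1
      simp [hτinv x]
    · refine ⟨Quot.lift (fun x => confQuotMk Y ⟨(f x, f (τ x)), fun hx => hne x hx.symm⟩) ?_,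
        ?_, fun x => rfl⟩
      · intro a b hab
        cases hab
        apply Eq.symm
        apply Quot.sound
        show _ = confSwap _
        simp only [confSwap]
        congr 1
        simp [hτinv a]
      · exact continuous_quot_lift _
          ((continuous_quot_mk.comp ((hf.prodMk (hf.comp hτc)).subtype_mk _)))
  · rintro ⟨φ, hφc, hφeq, _⟩ hBU
    obtain ⟨x, hx⟩ := hBU (fun x => (φ x).1.1)
      ((continuous_fst.comp continuous_subtype_val).comp hφc)
    have : (φ (τ x)).1.1 = (φ x).1.1 := hx
    rw [hφeq x] at this
    exact (φ x).2 this.symm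
end

section
/- Let X and Y be Hausdorff spaces and let τ : X → X be a fixed-point free continuous involution. If the triple ((X,τ);Y) does not satisfy the Borsuk–Ulam property, then secat(q) ≤ secat(q^Y), where q : X → X/τ is the quotient double covering and q^Y : F(Y,2) → D(Y,2) is the configuration-space double covering. Equivalently, if secat(q) > secat(q^Y) then ((X,τ);Y) satisfies the Borsuk–Ulam property. -/
open Metric Set

section Aux

private lemma involQuotMk_eq_iff {X : Type*} [TopologicalSpace X] {τ : X → X}
    (hτ : Function.Involutive τ) (a b : X) :
    involQuotMk τ a = involQuotMk τ b ↔ (b = a ∨ b = τ a) := by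
  constructor
  · intro h
    have h' : Relation.EqvGen (orbitRelOf τ) a b := Quot.eq.mp h
    clear h
    induction h' with
    | rel x y hxy => exact Or.inr hxy
    | refl x => exact Or.inl rfl
    | symm x y _ ih =>
      rcases ih with h1 | h1
      · exact Or.inl h1.symm
      · right; rw [h1]; exact (hτ x).symm
    | trans x y z _ _ ih1 ih2 =>
      rcases ih2 with h2 | h2 <;> rcases ih1 with h1 | h1
      · exact Or.inl (h2.trans h1)
      · right; rw [h2, h1]
      · right; rw [h2, h1]
      · left; rw [h2, h1, hτ]
  · rintro (rfl | rfl)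
    · rfl
    · exact Quot.sound rfl

private lemma involQuot_isOpenMap {X : Type*} [TopologicalSpace X] {τ : X → X}
    (hτc : Continuous τ) (hτ : Function.Involutive τ) :
    IsOpenMap (involQuotMk τ) := by
  intro O hO
  have key : involQuotMk τ ⁻¹' (involQuotMk τ '' O) = O ∪ τ ⁻¹' O := by
    ext x
    simp only [Set.mem_preimage, Set.mem_image, Set.mem_union]
    constructor
    · rintro ⟨o, ho, h⟩
      rcases (involQuotMk_eq_iff hτ o x).mp h with rfl | rfl
      · exact Or.inl ho
      · right; show τ (τ o) ∈ O; rw [hτ]; exact ho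
    · rintro (hx | hx)
      · exact ⟨x, hx, rfl⟩
      · exact ⟨τ x, hx, ((involQuotMk_eq_iff hτ x (τ x)).mpr (Or.inr rfl)).symm⟩
  rw [isOpen_coinduced (f := Quot.mk (orbitRelOf τ))]
  show IsOpen (involQuotMk τ ⁻¹' (involQuotMk τ '' O))
  rw [key]
  exact hO.union (hO.preimage hτc)

private lemma confSwap_involutive {Y : Type*} [TopologicalSpace Y] :
    Function.Involutive (confSwap (Y := Y)) := fun p => Subtype.ext rfl

private lemma pull_section {X Y : Type*} [TopologicalSpace X] [TopologicalSpace Y]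
    [T2Space Y] {τ : X → X} (hτc : Continuous τ) (hτinv : Function.Involutive τ)
    {f : X → Y} (hf : Continuous f) (hne : ∀ x, f (τ x) ≠ f x)
    {Fbar : InvolQuot τ → UConf2 Y} (hFbar : Continuous Fbar)
    (hcomm : ∀ x, Fbar (involQuotMk τ x)
      = confQuotMk Y ⟨(f x, f (τ x)), Ne.symm (hne x)⟩)
    {U : Set (UConf2 Y)} (hU : IsOpen U) (hsec : IsLocalSection (confQuotMk Y) U) :
    IsLocalSection (involQuotMk τ) (Fbar ⁻¹' U) := by
  classical
  obtain ⟨s, hsc, hs⟩ := hsec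
  set q : X → InvolQuot τ := involQuotMk τ with hq
  have hqc : Continuous q := continuous_quot_mk
  set F : X → Conf2 Y := fun x => ⟨(f x, f (τ x)), Ne.symm (hne x)⟩ with hFdef
  have hFc : Continuous F := (hf.prodMk (hf.comp hτc)).subtype_mk _
  have hFswap : ∀ x, F (τ x) = confSwap (F x) := by
    intro x
    apply Subtype.ext
    show (f (τ x), f (τ (τ x))) = (f (τ x), f x)
    rw [hτinv x]
  have hFne : ∀ x, F x ≠ F (τ x) := by
    intro x h
    have := congrArg (fun p : Conf2 Y => p.1.1) h
    exact hne x this.symm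
  have hqτ : ∀ x, q (τ x) = q x :=
    fun x => ((involQuotMk_eq_iff hτinv x (τ x)).mpr (Or.inr rfl)).symm
  set A : Set X := (fun x => Fbar (q x)) ⁻¹' U with hAdef
  have hAopen : IsOpen A := hU.preimage (hFbar.comp hqc)
  set σ : A → Conf2 Y := fun a => s ⟨Fbar (q (a : X)), a.2⟩ with hσdef
  have hσc : Continuous σ :=
    hsc.comp (((hFbar.comp hqc).comp continuous_subtype_val).subtype_mk _)
  have hσcong : ∀ a b : A, q (a : X) = q (b : X) → σ a = σ b := by
    intro a b h
    have heq : (⟨Fbar (q (a : X)), a.2⟩ : U) = ⟨Fbar (q (b : X)), b.2⟩ :=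
      Subtype.ext (congrArg Fbar h)
    show s ⟨Fbar (q (a : X)), a.2⟩ = s ⟨Fbar (q (b : X)), b.2⟩
    rw [heq]
  have hdich : ∀ a : A, F (a : X) = σ a ∨ F (τ (a : X)) = σ a := by
    intro a
    have h1 : confQuotMk Y (F (a : X)) = confQuotMk Y (σ a) := by
      rw [hs ⟨Fbar (q (a : X)), a.2⟩]
      exact (hcomm (a : X)).symm
    rcases (involQuotMk_eq_iff confSwap_involutive (F (a : X)) (σ a)).mp h1 with h2 | h2
    · exact Or.inl h2.symm
    · right; rw [h2, hFswap]
  -- W'' is closed, W' is its complement, hence open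
  set W'' : Set A := {a : A | F (τ (a : X)) = σ a} with hW''def
  set W' : Set A := {a : A | F (a : X) = σ a} with hW'def
  have hW''closed : IsClosed W'' :=
    isClosed_eq ((hFc.comp hτc).comp continuous_subtype_val) hσc
  have hW'eq : W' = W''ᶜ := by
    ext a
    simp only [hW'def, hW''def, Set.mem_setOf_eq, Set.mem_compl_iff]
    constructor
    · intro h1 h2
      exact hFne (a : X) (h1.trans h2.symm)
    · intro h2
      rcases hdich a with h | h
      · exact h
      · exact absurd h h2
  have hW'open : IsOpen W' := hW'eq ▸ hW''closed.isOpen_compl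
  set W : Set X := Subtype.val '' W' with hWdef
  have hWopen : IsOpen W := hAopen.isOpenMap_subtype_val W' hW'open
  have hWmem : ∀ x : X, x ∈ W ↔ ∃ h : x ∈ A, F x = σ ⟨x, h⟩ := by
    intro x
    constructor
    · rintro ⟨a, ha, rfl⟩; exact ⟨a.2, ha⟩
    · rintro ⟨h, hx⟩; exact ⟨⟨x, h⟩, hx, rfl⟩
  have huniq : ∀ x₁ x₂, x₁ ∈ W → x₂ ∈ W → q x₁ = q x₂ → x₁ = x₂ := by
    intro x₁ x₂ h1 h2 hq12
    rcases (involQuotMk_eq_iff hτinv x₁ x₂).mp hq12 with rfl | rfl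
    · rfl
    · obtain ⟨hA1, he1⟩ := (hWmem x₁).mp h1
      obtain ⟨hA2, he2⟩ := (hWmem (τ x₁)).mp h2
      have hσeq : σ ⟨τ x₁, hA2⟩ = σ ⟨x₁, hA1⟩ := hσcong _ _ (hqτ x₁)
      exact absurd (he1.trans (hσeq.symm.trans he2.symm)) (hFne x₁)
  have hex : ∀ v : (Fbar ⁻¹' U : Set (InvolQuot τ)), ∃ x, x ∈ W ∧ q x = (v : InvolQuot τ) := by
    rintro ⟨v, hv⟩
    obtain ⟨x₀, rfl⟩ : ∃ x₀, q x₀ = v := ⟨Quot.out v, Quot.out_eq v⟩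
    have hA0 : x₀ ∈ A := hv
    rcases hdich ⟨x₀, hA0⟩ with h | h
    · exact ⟨x₀, (hWmem x₀).mpr ⟨hA0, h⟩, rfl⟩
    · have hA1 : τ x₀ ∈ A := by
        show Fbar (q (τ x₀)) ∈ U
        rw [hqτ]; exact hv
      refine ⟨τ x₀, (hWmem (τ x₀)).mpr ⟨hA1, ?_⟩, hqτ x₀⟩
      rw [hσcong ⟨τ x₀, hA1⟩ ⟨x₀, hA0⟩ (hqτ x₀)]
      exact h
  choose t htW htq using hex
  refine ⟨t, ?_, htq⟩
  rw [continuous_def]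
  intro O hO
  have hkey : t ⁻¹' O = Subtype.val ⁻¹' (q '' (W ∩ O)) := by
    ext v
    simp only [Set.mem_preimage, Set.mem_image, Set.mem_inter_iff]
    constructor
    · intro h
      exact ⟨t v, ⟨htW v, h⟩, htq v⟩
    · rintro ⟨x, ⟨hxW, hxO⟩, hqx⟩
      have : t v = x := huniq _ _ (htW v) hxW (by rw [htq v, hqx])
      rw [this]; exact hxO
  rw [hkey]
  exact (involQuot_isOpenMap hτc hτinv _ (hWopen.inter hO)).preimage continuous_subtype_val

private lemma key_le {X Y : Type*} [TopologicalSpace X] [TopologicalSpace Y]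
    [T2Space X] [T2Space Y] (τ : X → X) (hτc : Continuous τ)
    (hτinv : Function.Involutive τ)
    (hb : ¬ BorsukUlamProperty X τ Y) :
    secat (involQuotMk τ) ≤ secat (confQuotMk Y) := by
  unfold BorsukUlamProperty at hb
  push_neg at hb
  obtain ⟨f, hf, hne⟩ := hb
  set F : X → Conf2 Y := fun x => ⟨(f x, f (τ x)), Ne.symm (hne x)⟩ with hFdef
  have hFc : Continuous F := (hf.prodMk (hf.comp hτc)).subtype_mk _
  have hFswap : ∀ x, F (τ x) = confSwap (F x) := by
    intro x
    apply Subtype.ext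
    show (f (τ x), f (τ (τ x))) = (f (τ x), f x)
    rw [hτinv x]
  have hlift : ∀ a b, orbitRelOf τ a b → confQuotMk Y (F a) = confQuotMk Y (F b) := by
    rintro a b (rfl : b = τ a)
    rw [hFswap]
    exact Quot.sound rfl
  set Fbar : InvolQuot τ → UConf2 Y := Quot.lift (fun x => confQuotMk Y (F x)) hlift
    with hFbardef
  have hFbarc : Continuous Fbar := continuous_quot_lift hlift (by
    exact (continuous_quot_mk).comp hFc)
  have hcomm : ∀ x, Fbar (involQuotMk τ x)
      = confQuotMk Y ⟨(f x, f (τ x)), Ne.symm (hne x)⟩ := fun x => rfl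
  apply sInf_le_sInf
  rintro n ⟨k, rfl, U, hUopen, hUcover, hUsec⟩
  refine ⟨k, rfl, fun i => Fbar ⁻¹' (U i), fun i => (hUopen i).preimage hFbarc, ?_, fun i =>
    pull_section hτc hτinv hf hne hFbarc hcomm (hUopen i) (hUsec i)⟩
  rw [← Set.preimage_iUnion, hUcover, Set.preimage_univ]

end Aux

/-- if `((X,τ);Y)` does not satisfy the BUP then `secat q ≤ secat q^Y`;
equivalently, `secat q^Y < secat q` implies the BUP. -/
theorem stmt_6 {X Y : Type*} [TopologicalSpace X] [TopologicalSpace Y]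
    [T2Space X] [T2Space Y] (τ : X → X) (hτc : Continuous τ)
    (hτinv : Function.Involutive τ) (hτfree : ∀ x, τ x ≠ x) :
    (¬ BorsukUlamProperty X τ Y →
      secat (involQuotMk τ) ≤ secat (confQuotMk Y)) ∧
    (secat (confQuotMk Y) < secat (involQuotMk τ) →
      BorsukUlamProperty X τ Y) := by
  constructor
  · exact key_le τ hτc hτinv
  · intro h
    by_contra hb
    exact absurd (key_le τ hτc hτinv hb) (not_le.mpr h)
end

section
/- Let M be a connected m-dimensional CW complex with a fixed-point free cellular involution τ, and let q : M → M/τ be the quotient double covering. If secat(q) = m + 1, then the ℤ/2-index of (M,τ) equals m; that is, ((M,τ); ℝ^m) satisfies the Borsuk–Ulam property. -/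
open Metric Set

/-!
For a free involution on a normal Hausdorff space, `secat q = ind_{ℤ/2} M + 1`. An equivariant
map `g : M → Sᵏ` gives the `k + 1` open sets `{x | 0 < gᵢ x}`, on each of which `q` is injective,
hence a homeomorphism onto an open set of `M/τ`. Conversely, take `k + 1` open sets of `M/τ` with
local sections and a partition of unity on `M` subordinate to their preimages; symmetrised under
`τ` and given opposite signs on the two sheets over each set, it becomes an odd map
`M → ℝ^{k+1} ∖ 0`, which normalises to an equivariant map to `Sᵏ`.

A CW complex is normal by the Tietze extension theorem for CW complexes, proved cell by cell by
induction on the dimension. Finally, index `m`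
gives the Borsuk–Ulam property for `ℝᵐ`: if `f x ≠ f (τ x)` everywhere, `f - f ∘ τ` is odd and
nowhere zero, so the index would be at most `m - 1`.
-/

universe u

open Topology

theorem IsCompact.continuousOn_image_of_comp {α β γ : Type*} [TopologicalSpace α]
    [TopologicalSpace β] [T2Space β] [TopologicalSpace γ] {K : Set α} {f : α → β} {g : β → γ}
    (hK : IsCompact K) (hf : ContinuousOn f K) (hgf : ContinuousOn (g ∘ f) K) :
    ContinuousOn g (f '' K) := by
  refine continuousOn_iff_isClosed.mpr fun t ht => ?_
  obtain ⟨u, hu, hKu⟩ := continuousOn_iff_isClosed.mp hgf t ht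
  refine ⟨f '' (u ∩ K), ((hK.inter_left hu).image_of_continuousOn
    (hf.mono inter_subset_right)).isClosed, ?_⟩
  rw [← hKu]
  ext y
  constructor
  · rintro ⟨hy, x, hx, rfl⟩
    exact ⟨⟨x, ⟨hy, hx⟩, rfl⟩, x, hx, rfl⟩
  · rintro ⟨⟨x, ⟨hx, hxK⟩, rfl⟩, -⟩
    exact ⟨hx, x, hxK, rfl⟩

namespace CWStructure

variable {X : Type u} [TopologicalSpace X] (S : CWStructure X)

def closedCell (n : ℕ) (i : S.cell n) : Set X := S.map n i '' closedBall 0 1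

theorem isClosed_closedCell [T2Space X] (n : ℕ) (i : S.cell n) : IsClosed (S.closedCell n i) :=
  ((isCompact_closedBall _ _).image_of_continuousOn (S.continuousOn n i)).isClosed

theorem continuous_of_forall_continuousOn_closedCell [T2Space X] {Y : Type*} [TopologicalSpace Y]
    {g : X → Y} (hg : ∀ n i, ContinuousOn g (S.closedCell n i)) : Continuous g :=
  continuous_iff_isClosed.mpr fun C hC => S.weakTopology _ fun n i => by
    rw [inter_comm]
    exact (hg n i).preimage_isClosed_of_isClosed (S.isClosed_closedCell n i) hC

noncomputable def cellOf (x : X) : Σ n, S.cell n := (S.partition x).exists.choose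

theorem mem_image_ball_cellOf (x : X) :
    x ∈ S.map (S.cellOf x).1 (S.cellOf x).2 '' ball 0 1 :=
  (S.partition x).exists.choose_spec

theorem cellOf_eq {x : X} {p : Σ n, S.cell n} (hp : x ∈ S.map p.1 p.2 '' ball 0 1) :
    S.cellOf x = p :=
  (S.partition x).unique (S.mem_image_ball_cellOf x) hp

noncomputable def coordOf (x : X) : EuclideanSpace ℝ (Fin (S.cellOf x).1) :=
  (S.mem_image_ball_cellOf x).choose

theorem coordOf_mem_ball (x : X) : S.coordOf x ∈ ball 0 1 :=
  (S.mem_image_ball_cellOf x).choose_spec.1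

theorem map_coordOf (x : X) : S.map (S.cellOf x).1 (S.cellOf x).2 (S.coordOf x) = x :=
  (S.mem_image_ball_cellOf x).choose_spec.2

theorem mem_closedCell_cellOf (x : X) : x ∈ S.closedCell (S.cellOf x).1 (S.cellOf x).2 :=
  ⟨S.coordOf x, ball_subset_closedBall (S.coordOf_mem_ball x), S.map_coordOf x⟩

theorem cellOf_map_le {n : ℕ} (i : S.cell n) {z : EuclideanSpace ℝ (Fin n)}
    (hz : z ∈ closedBall 0 1) : (S.cellOf (S.map n i z)).1 ≤ n := by
  induction n using Nat.strong_induction_on with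
  | _ n ih =>
  by_cases hb : z ∈ ball 0 1
  · rw [S.cellOf_eq (p := ⟨n, i⟩) ⟨z, hb, rfl⟩]
  · have hs : z ∈ sphere 0 1 := by
      rw [← closedBall_sdiff_ball]
      exact ⟨hz, hb⟩
    have hmem := S.mapsTo_boundary n i hs
    simp only [mem_iUnion] at hmem
    obtain ⟨m, hm, j, w, hw, hwz⟩ := hmem
    rw [← hwz]
    exact (ih m hm j hw).trans hm.le

theorem cellOf_map_lt {n : ℕ} (i : S.cell n) {z : EuclideanSpace ℝ (Fin n)}
    (hz : z ∈ sphere 0 1) : (S.cellOf (S.map n i z)).1 < n := by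
  have hmem := S.mapsTo_boundary n i hz
  simp only [mem_iUnion] at hmem
  obtain ⟨m, hm, j, w, hw, hwz⟩ := hmem
  rw [← hwz]
  exact (S.cellOf_map_le j hw).trans_lt hm

variable (A : Set X) (f : X → ℝ)

def IsCellExtension (n : ℕ) (i : S.cell n) (b H : EuclideanSpace ℝ (Fin n) → ℝ) : Prop :=
  Continuous H ∧ EqOn H b (sphere 0 1) ∧
    ∀ z ∈ closedBall 0 1, S.map n i z ∈ A → H z = f (S.map n i z)

open Classical in
/-- The `0` branches are never taken: boundary points lie in lower cells, and a suitable `H`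
exists by `exists_isCellExtension`. -/
noncomputable def cellExtension : (n : ℕ) → S.cell n → EuclideanSpace ℝ (Fin n) → ℝ
  | n, i =>
    let b := fun z => if _ : (S.cellOf (S.map n i z)).1 < n then
      cellExtension _ (S.cellOf (S.map n i z)).2 (S.coordOf (S.map n i z)) else 0
    if hH : ∃ H, S.IsCellExtension A f n i b H then hH.choose else 0
  termination_by n => n

noncomputable def extension (x : X) : ℝ := S.cellExtension A f _ (S.cellOf x).2 (S.coordOf x)

open Classical in
noncomputable def boundaryValue (n : ℕ) (i : S.cell n) (z : EuclideanSpace ℝ (Fin n)) : ℝ :=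
  if (S.cellOf (S.map n i z)).1 < n then S.extension A f (S.map n i z) else 0

open Classical in
theorem cellExtension_eq (n : ℕ) (i : S.cell n) :
    S.cellExtension A f n i = if hH : ∃ H, S.IsCellExtension A f n i (S.boundaryValue A f n i) H
      then hH.choose else 0 := by
  rw [cellExtension]
  rfl

variable {A f}

theorem boundaryValue_of_mem_sphere {n : ℕ} (i : S.cell n) {z : EuclideanSpace ℝ (Fin n)}
    (hz : z ∈ sphere 0 1) : S.boundaryValue A f n i z = S.extension A f (S.map n i z) :=
  if_pos (S.cellOf_map_lt i hz)

theorem extension_map_of_mem_ball {n : ℕ} (i : S.cell n) {z : EuclideanSpace ℝ (Fin n)}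
    (hz : z ∈ ball 0 1) : S.extension A f (S.map n i z) = S.cellExtension A f n i z := by
  have key : ∀ p : Σ m, S.cell m, p = ⟨n, i⟩ → ∀ w : EuclideanSpace ℝ (Fin p.1),
      w ∈ ball 0 1 → S.map p.1 p.2 w = S.map n i z →
      S.cellExtension A f p.1 p.2 w = S.cellExtension A f n i z := by
    rintro _ rfl w hw hwz
    rw [S.injOn n i hw hz hwz]
  exact key _ (S.cellOf_eq ⟨z, hz, rfl⟩) _ (S.coordOf_mem_ball _) (S.map_coordOf _)

variable {n : ℕ} {i : S.cell n}

theorem extension_map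
    (hG : S.IsCellExtension A f n i (S.boundaryValue A f n i) (S.cellExtension A f n i))
    {z : EuclideanSpace ℝ (Fin n)} (hz : z ∈ closedBall 0 1) :
    S.extension A f (S.map n i z) = S.cellExtension A f n i z := by
  by_cases hb : z ∈ ball 0 1
  · exact S.extension_map_of_mem_ball i hb
  · have hs : z ∈ sphere 0 1 := by
      rw [← closedBall_sdiff_ball]
      exact ⟨hz, hb⟩
    rw [hG.2.1 hs, S.boundaryValue_of_mem_sphere i hs]

theorem continuousOn_extension_closedCell [T2Space X]
    (hG : S.IsCellExtension A f n i (S.boundaryValue A f n i) (S.cellExtension A f n i)) :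
    ContinuousOn (S.extension A f) (S.closedCell n i) :=
  (isCompact_closedBall _ _).continuousOn_image_of_comp (S.continuousOn n i)
    (hG.1.continuousOn.congr fun _ hz => S.extension_map hG hz)

theorem extension_eq_of_mem {x : X}
    (hG : S.IsCellExtension A f _ (S.cellOf x).2 (S.boundaryValue A f _ (S.cellOf x).2)
      (S.cellExtension A f _ (S.cellOf x).2)) (hx : x ∈ A) :
    S.extension A f x = f x := by
  have h := hG.2.2 (S.coordOf x) (ball_subset_closedBall (S.coordOf_mem_ball x))
    (by rwa [S.map_coordOf])
  rwa [S.map_coordOf] at h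

variable [T2Space X]

/-- Closure finiteness: the boundary of a cell meets only finitely many lower cells, on each of
which the extension is already continuous. -/
theorem continuousOn_boundaryValue (ih : ∀ p : Σ m, S.cell m, p.1 < n →
      S.IsCellExtension A f p.1 p.2 (S.boundaryValue A f p.1 p.2) (S.cellExtension A f p.1 p.2)) :
    ContinuousOn (S.boundaryValue A f n i) (sphere 0 1) := by
  set s := {p : Σ m, S.cell m |
    (S.map p.1 p.2 '' ball 0 1 ∩ S.closedCell n i).Nonempty ∧ p.1 < n}
  have : Finite s := ((S.closureFinite n i).subset fun _ hp => hp.1).to_subtype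
  have hT : ContinuousOn (S.extension A f) (⋃ p : s, S.closedCell p.1.1 p.1.2) :=
    (locallyFinite_of_finite _).continuousOn_iUnion (fun p => S.isClosed_closedCell _ _)
      fun p => S.continuousOn_extension_closedCell (ih p.1 p.2.2)
  have hmaps : MapsTo (S.map n i) (sphere 0 1) (⋃ p : s, S.closedCell p.1.1 p.1.2) := by
    intro z hz
    set x := S.map n i z
    refine mem_iUnion.mpr ⟨⟨S.cellOf x, ⟨x, S.mem_image_ball_cellOf x,
      z, sphere_subset_closedBall hz, rfl⟩, S.cellOf_map_lt i hz⟩, S.mem_closedCell_cellOf x⟩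
  exact (hT.comp ((S.continuousOn n i).mono sphere_subset_closedBall) hmaps).congr
    fun z hz => S.boundaryValue_of_mem_sphere i hz

open Classical in
/-- Tietze's theorem on the closed disk, applied to the boundary values on the sphere and
to `f` on the part of the disk mapped into `A`. -/
theorem exists_isCellExtension (hA : IsClosed A) (hf : ContinuousOn f A)
    (ih : ∀ p : Σ m, S.cell m, p.1 < n →
      S.IsCellExtension A f p.1 p.2 (S.boundaryValue A f p.1 p.2) (S.cellExtension A f p.1 p.2)) :
    ∃ H, S.IsCellExtension A f n i (S.boundaryValue A f n i) H := by
  set B := closedBall (0 : EuclideanSpace ℝ (Fin n)) 1 ∩ S.map n i ⁻¹' A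
  have hB : IsClosed B := (S.continuousOn n i).preimage_isClosed_of_isClosed isClosed_closedBall hA
  have hbA : ∀ z ∈ sphere 0 1, S.map n i z ∈ A → S.boundaryValue A f n i z = f (S.map n i z) :=
    fun z hz hzA => by
      rw [S.boundaryValue_of_mem_sphere i hz]
      exact S.extension_eq_of_mem (ih _ (S.cellOf_map_lt i hz)) hzA
  set g := (sphere 0 1).piecewise (S.boundaryValue A f n i) (f ∘ S.map n i)
  have hg_sphere : EqOn g (S.boundaryValue A f n i) (sphere 0 1) := piecewise_eqOn _ _ _
  have hg_B : EqOn g (f ∘ S.map n i) B := fun z hz => by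
    by_cases hs : z ∈ sphere 0 1
    · rw [hg_sphere hs]
      exact hbA z hs hz.2
    · exact piecewise_eq_of_notMem _ _ _ hs
  have hg : ContinuousOn g (sphere 0 1 ∪ B) :=
    ((S.continuousOn_boundaryValue ih).congr hg_sphere).union_of_isClosed
      ((hf.comp ((S.continuousOn n i).mono inter_subset_left) fun _ hz => hz.2).congr hg_B)
      isClosed_sphere hB
  obtain ⟨H, hH⟩ := ContinuousMap.exists_restrict_eq (isClosed_sphere.union hB) ⟨_, hg.domRestrict⟩
  have hHg : EqOn H g (sphere 0 1 ∪ B) := fun z hz => DFunLike.congr_fun hH ⟨z, hz⟩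
  exact ⟨H, H.continuous, fun z hz => (hHg (Or.inl hz)).trans (hg_sphere hz),
    fun z hz hzA => (hHg (Or.inr ⟨hz, hzA⟩)).trans (hg_B ⟨hz, hzA⟩)⟩

theorem isCellExtension_cellExtension (hA : IsClosed A) (hf : ContinuousOn f A) (n : ℕ)
    (i : S.cell n) :
    S.IsCellExtension A f n i (S.boundaryValue A f n i) (S.cellExtension A f n i) := by
  induction n using Nat.strong_induction_on with
  | _ n ih =>
  have hex := S.exists_isCellExtension (i := i) hA hf fun p hp => ih p.1 hp p.2
  rw [cellExtension_eq, dif_pos hex]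
  exact hex.choose_spec

include S in
theorem exists_continuous_eqOn (hA : IsClosed A) (hf : ContinuousOn f A) :
    ∃ F : X → ℝ, Continuous F ∧ EqOn F f A :=
  ⟨S.extension A f, S.continuous_of_forall_continuousOn_closedCell fun n i =>
      S.continuousOn_extension_closedCell (S.isCellExtension_cellExtension hA hf n i),
    fun _ hx => S.extension_eq_of_mem (S.isCellExtension_cellExtension hA hf _ _) hx⟩

include S in
theorem normalSpace : NormalSpace X where
  normal s t hs ht hst := by
    have hind : ContinuousOn (t.indicator 1 : X → ℝ) (s ∪ t) :=
      (continuousOn_const (c := 0).congr fun _ hx =>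
          indicator_of_notMem (hst.notMem_of_mem_left hx) _).union_of_isClosed
        (continuousOn_const (c := 1).congr fun _ hx => indicator_of_mem hx _) hs ht
    obtain ⟨F, hFc, hF⟩ := S.exists_continuous_eqOn (hs.union ht) hind
    refine ((normal_separation isClosed_singleton isClosed_singleton
      (disjoint_singleton.mpr zero_ne_one)).preimage hFc).mono (fun x hx => ?_) fun x hx => ?_
    · simp [hF (Or.inl hx), indicator_of_notMem (hst.notMem_of_mem_left hx)]
    · simp [hF (Or.inr hx), indicator_of_mem hx]

end CWStructure

theorem IsOpenMap.isLocalSection_image {E B : Type*} [TopologicalSpace E] [TopologicalSpace B]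
    {p : E → B} (hp : IsOpenMap p) (hpc : Continuous p) {A : Set E} (hA : IsOpen A)
    (hinj : InjOn p A) : IsLocalSection p (p '' A) := by
  have he : IsEmbedding (A.domRestrict p) :=
    (IsOpenEmbedding.of_continuous_injective_isOpenMap (hpc.comp continuous_subtype_val)
      hinj.injective (hp.domRestrict hA)).toIsEmbedding
  let s : p '' A → A := fun y => he.toHomeomorph.symm ⟨y, by rw [range_domRestrict]; exact y.2⟩
  refine ⟨fun y => s y, continuous_subtype_val.comp
    (he.toHomeomorph.continuous_symm.comp (continuous_subtype_val.subtype_mk _)), fun y => ?_⟩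
  change A.domRestrict p (s y) = y
  rw [← he.toHomeomorph_apply_coe, Homeomorph.apply_symm_apply]

section Involution

variable {M : Type*} [TopologicalSpace M] {τ : M → M}

theorem continuous_involQuotMk : Continuous (involQuotMk τ) := continuous_quot_mk

@[simp]
theorem involQuotMk_apply (x : M) : involQuotMk τ (τ x) = involQuotMk τ x :=
  (Quot.sound (show orbitRelOf τ x (τ x) from rfl)).symm

theorem involQuotMk_eq_iff_s17 (hτ : Function.Involutive τ) {x y : M} :
    involQuotMk τ x = involQuotMk τ y ↔ y = x ∨ y = τ x := by
  constructor
  · intro hxy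
    have horbit : ({x, τ x} : Set M) = {y, τ y} := congrArg
      (Quot.lift (fun a => ({a, τ a} : Set M)) fun a b (hab : b = τ a) => by
        rw [hab, hτ a, pair_comm]) hxy
    have hy : y ∈ ({x, τ x} : Set M) := horbit ▸ mem_insert y _
    simpa using hy
  · rintro (rfl | rfl)
    · rfl
    · exact (involQuotMk_apply x).symm

theorem isOpenMap_involQuotMk (hτc : Continuous τ) (hτ : Function.Involutive τ) :
    IsOpenMap (involQuotMk τ) := by
  intro U hU
  have hsat : involQuotMk τ ⁻¹' (involQuotMk τ '' U) = U ∪ τ ⁻¹' U := by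
    ext x
    simp only [mem_preimage, mem_image, mem_union, involQuotMk_eq_iff_s17 hτ]
    constructor
    · rintro ⟨u, hu, rfl | rfl⟩
      exacts [Or.inl hu, Or.inr ((hτ u).symm ▸ hu)]
    · rintro (hx | hx)
      exacts [⟨x, hx, Or.inl rfl⟩, ⟨τ x, hx, Or.inr (hτ x).symm⟩]
  refine isQuotientMap_quot_mk.isOpen_preimage.mp ?_
  rw [show Quot.mk _ ⁻¹' _ = involQuotMk τ ⁻¹' (involQuotMk τ '' U) from rfl, hsat]
  exact hU.union (hU.preimage hτc)

end Involution

theorem sInf_natCast_setOf_mem {P : ℕ → Prop} (h : sInf {n : ℕ∞ | ∃ k : ℕ, n = k ∧ P k} ≠ ⊤) :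
    ∃ k : ℕ, sInf {n : ℕ∞ | ∃ k : ℕ, n = k ∧ P k} = k ∧ P k := by
  have hne : {n : ℕ∞ | ∃ k : ℕ, n = k ∧ P k}.Nonempty :=
    nonempty_iff_ne_empty.mpr fun he => h (by rw [he, sInf_empty])
  exact csInf_mem hne

section Secat

variable {E B : Type*} [TopologicalSpace E] [TopologicalSpace B] {p : E → B}

theorem secat_le {k : ℕ} (U : Fin k → Set B) (hU : ∀ i, IsOpen (U i)) (hcov : ⋃ i, U i = univ)
    (hsec : ∀ i, IsLocalSection p (U i)) : secat p ≤ k :=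
  sInf_le ⟨k, rfl, U, hU, hcov, hsec⟩

theorem exists_cover_of_secat_ne_top (h : secat p ≠ ⊤) :
    ∃ k : ℕ, secat p = k ∧ ∃ U : Fin k → Set B,
      (∀ i, IsOpen (U i)) ∧ ⋃ i, U i = univ ∧ ∀ i, IsLocalSection p (U i) :=
  sInf_natCast_setOf_mem h

end Secat

section Index

variable {M : Type*} [TopologicalSpace M] {τ : M → M}

theorem z2Index_le {k : ℕ} (g : M → Sph k) (hg : Continuous g)
    (hgτ : ∀ x, g (τ x) = antipodal k (g x)) : z2Index τ ≤ k :=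
  sInf_le ⟨k, rfl, g, hg, hgτ⟩

theorem exists_equivariant_of_z2Index_ne_top (h : z2Index τ ≠ ⊤) :
    ∃ k : ℕ, z2Index τ = k ∧
      ∃ g : M → Sph k, Continuous g ∧ ∀ x, g (τ x) = antipodal k (g x) :=
  sInf_natCast_setOf_mem h

theorem z2Index_le_of_odd {k : ℕ} (G : M → EuclideanSpace ℝ (Fin (k + 1))) (hG : Continuous G)
    (hG0 : ∀ x, G x ≠ 0) (hGτ : ∀ x, G (τ x) = -G x) : z2Index τ ≤ k := by
  have hnorm : ∀ x, ‖G x‖ ≠ 0 := fun x => norm_ne_zero_iff.mpr (hG0 x)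
  have hmem : ∀ x, ‖G x‖⁻¹ • G x ∈ sphere (0 : EuclideanSpace ℝ (Fin (k + 1))) 1 := fun x => by
    rw [mem_sphere_zero_iff_norm, norm_smul, norm_inv, norm_norm, inv_mul_cancel₀ (hnorm x)]
  refine z2Index_le (fun x => ⟨‖G x‖⁻¹ • G x, hmem x⟩)
    (((hG.norm.inv₀ hnorm).smul hG).subtype_mk hmem) fun x => Subtype.ext ?_
  simp only [antipodal, coe_neg_sphere, hGτ, norm_neg, smul_neg]

theorem coe_apply_antipodal {k : ℕ} (v : Sph k) (i : Fin (k + 1)) :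
    (antipodal k v : EuclideanSpace ℝ (Fin (k + 1))) i =
      -(v : EuclideanSpace ℝ (Fin (k + 1))) i := by
  simp [antipodal, coe_neg_sphere]

theorem secat_le_of_equivariant (hτc : Continuous τ) (hτ : Function.Involutive τ) {k : ℕ}
    (g : M → Sph k) (hg : Continuous g) (hgτ : ∀ x, g (τ x) = antipodal k (g x)) :
    secat (involQuotMk τ) ≤ k + 1 := by
  set A : Fin (k + 1) → Set M := fun i => {x | 0 < (g x : EuclideanSpace ℝ (Fin (k + 1))) i}
  have hA : ∀ i, IsOpen (A i) := fun i =>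
    isOpen_lt continuous_const ((PiLp.continuous_apply 2 _ i).comp (continuous_subtype_val.comp hg))
  have hodd : ∀ x i, (g (τ x) : EuclideanSpace ℝ (Fin (k + 1))) i =
      -(g x : EuclideanSpace ℝ (Fin (k + 1))) i := fun x i => by
    rw [hgτ, coe_apply_antipodal]
  have hq := isOpenMap_involQuotMk hτc hτ
  refine (secat_le (k := k + 1) (fun i => involQuotMk τ '' A i) (fun i => hq _ (hA i))
    ?_ fun i => hq.isLocalSection_image continuous_involQuotMk (hA i) ?_).trans (by push_cast; rfl)
  · refine eq_univ_of_forall fun b => ?_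
    obtain ⟨x, rfl⟩ := Quot.exists_rep b
    have hx : (g x : EuclideanSpace ℝ (Fin (k + 1))) ≠ 0 := ne_zero_of_mem_unit_sphere (g x)
    obtain ⟨i, hi⟩ : ∃ i, (g x : EuclideanSpace ℝ (Fin (k + 1))) i ≠ 0 := by
      by_contra! h
      exact hx (PiLp.ext h)
    refine mem_iUnion.mpr ⟨i, ?_⟩
    rcases hi.lt_or_gt with hneg | hpos
    · refine ⟨τ x, ?_, involQuotMk_apply x⟩
      change 0 < (g (τ x) : EuclideanSpace ℝ (Fin (k + 1))) i
      linarith [hodd x i]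
    · exact ⟨x, hpos, rfl⟩
  · intro x hx y hy hxy
    rcases (involQuotMk_eq_iff_s17 hτ).mp hxy with rfl | rfl
    · rfl
    · have hx' : 0 < (g x : EuclideanSpace ℝ (Fin (k + 1))) i := hx
      have hy' : 0 < (g (τ x) : EuclideanSpace ℝ (Fin (k + 1))) i := hy
      linarith [hodd x i]

end Index

section Free

variable {M : Type*} [TopologicalSpace M] [T2Space M] {τ : M → M}

/-- Inside `q⁻¹ U`, the range of `s` is the complement of the closed set where `s ∘ q` and `τ`
agree. -/
theorem isOpen_range_of_section (hτc : Continuous τ) (hτ : Function.Involutive τ)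
    (hfree : ∀ x, τ x ≠ x) {U : Set (InvolQuot τ)} (hU : IsOpen U) {s : U → M}
    (hs : Continuous s) (hqs : ∀ u, involQuotMk τ (s u) = u) : IsOpen (range s) := by
  set V := involQuotMk τ ⁻¹' U
  let r : V → M := fun v => s ⟨involQuotMk τ v, v.2⟩
  have hr : Continuous r :=
    hs.comp ((continuous_involQuotMk.comp continuous_subtype_val).subtype_mk _)
  have hr_cases : ∀ v, r v = v ∨ r v = τ v := fun v => by
    rcases (involQuotMk_eq_iff_s17 hτ).mp (hqs ⟨involQuotMk τ v, v.2⟩).symm with h | h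
    exacts [Or.inl h, Or.inr h]
  have hrange : range s = Subtype.val '' {v : V | r v = τ v}ᶜ := by
    ext x
    constructor
    · rintro ⟨u, rfl⟩
      have hx : s u ∈ V := show involQuotMk τ (s u) ∈ U by rw [hqs]; exact u.2
      have hrx : r ⟨s u, hx⟩ = s u := congrArg s (Subtype.ext (hqs u))
      exact ⟨⟨s u, hx⟩, fun h => hfree (s u) (h.symm.trans hrx), rfl⟩
    · rintro ⟨v, hv, rfl⟩
      exact ⟨_, (hr_cases v).resolve_right hv⟩
  rw [hrange]
  exact (hU.preimage continuous_involQuotMk).isOpenMap_subtype_val _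
    (isClosed_eq hr (hτc.comp continuous_subtype_val)).isOpen_compl

theorem exists_odd_of_isLocalSection (hτc : Continuous τ) (hτ : Function.Involutive τ)
    (hfree : ∀ x, τ x ≠ x) {U : Set (InvolQuot τ)} (hU : IsOpen U)
    (hsec : IsLocalSection (involQuotMk τ) U) {ρ : M → ℝ} (hρ : Continuous ρ)
    (hρτ : ∀ x, ρ (τ x) = ρ x) (hρU : tsupport ρ ⊆ involQuotMk τ ⁻¹' U) :
    ∃ γ : M → ℝ, Continuous γ ∧ (∀ x, γ (τ x) = -γ x) ∧ ∀ x, |γ x| = |ρ x| := by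
  classical
  obtain ⟨s, hs, hqs⟩ := hsec
  set A := range s
  have hA : IsOpen A := isOpen_range_of_section hτc hτ hfree hU hs hqs
  have hAτ : ∀ x ∈ A, τ x ∉ A := by
    rintro _ ⟨u, rfl⟩ ⟨v, hv⟩
    have huv : u = v :=
      Subtype.ext ((hqs u).symm.trans (by rw [← involQuotMk_apply (s u), ← hv, hqs]))
    exact hfree (s u) (hv ▸ congrArg s huv).symm
  have hcover : ∀ x, involQuotMk τ x ∈ U → x ∈ A ∨ τ x ∈ A := fun x hx => by
    rcases (involQuotMk_eq_iff_s17 hτ).mp (hqs ⟨_, hx⟩).symm with h | h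
    · exact Or.inl ⟨_, h⟩
    · exact Or.inr ⟨_, h⟩
  refine ⟨A.piecewise ρ (-ρ), continuous_iff_continuousAt.mpr fun x => ?_, fun x => ?_,
    fun x => ?_⟩
  · by_cases hx : x ∈ tsupport ρ
    · rcases hcover x (hρU hx) with hxA | hτxA
      · exact hρ.continuousAt.congr (piecewise_eqOn _ _ _ |>.eventuallyEq_of_mem
          (hA.mem_nhds hxA)).symm
      · refine hρ.neg.continuousAt.congr (Filter.mem_of_superset
          ((hA.preimage hτc).mem_nhds hτxA) fun y hy => ?_)
        exact (piecewise_eq_of_notMem _ _ _ fun hyA => hAτ y hyA hy).symm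
    · have h0 : ρ =ᶠ[𝓝 x] 0 := notMem_tsupport_iff_eventuallyEq.mp hx
      have hγ0 : A.piecewise ρ (-ρ) =ᶠ[𝓝 x] 0 := h0.mono fun y hy => by
        by_cases hyA : y ∈ A <;> simp [hyA, hy]
      exact continuousAt_const.congr hγ0.symm
  · by_cases hxA : x ∈ A
    · simp [hxA, hAτ x hxA, hρτ]
    · by_cases hτxA : τ x ∈ A
      · simp [hxA, hτxA, hρτ]
      · have hx : ρ x = 0 := image_eq_zero_of_notMem_tsupport fun h =>
          (hcover x (hρU h)).elim hxA hτxA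
        simp [hxA, hτxA, hρτ, hx]
  · by_cases hxA : x ∈ A <;> simp [hxA]

theorem z2Index_le_of_cover [NormalSpace M] (hτc : Continuous τ) (hτ : Function.Involutive τ)
    (hfree : ∀ x, τ x ≠ x) {k : ℕ} (U : Fin (k + 1) → Set (InvolQuot τ))
    (hU : ∀ i, IsOpen (U i)) (hcov : ⋃ i, U i = univ)
    (hsec : ∀ i, IsLocalSection (involQuotMk τ) (U i)) : z2Index τ ≤ k := by
  set V := fun i => involQuotMk τ ⁻¹' U i
  have hVτ : ∀ i, τ ⁻¹' V i = V i := fun i => by ext x; simp [V]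
  obtain ⟨φ, hφ⟩ := PartitionOfUnity.exists_isSubordinate_of_locallyFinite isClosed_univ V
    (fun i => (hU i).preimage continuous_involQuotMk) (locallyFinite_of_finite _)
    (by simp [V, ← preimage_iUnion, hcov])
  set ρ : Fin (k + 1) → M → ℝ := fun i x => φ i x + φ i (τ x)
  have hρU : ∀ i, tsupport (ρ i) ⊆ V i := fun i =>
    (tsupport_add _ _).trans (union_subset (hφ i) <|
      (tsupport_comp_subset_preimage (φ i) hτc).trans ((hVτ i) ▸ preimage_mono (hφ i)))
  choose γ hγ hγτ hγρ using fun i => exists_odd_of_isLocalSection hτc hτ hfree (hU i) (hsec i)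
    (ρ := ρ i) (by fun_prop) (fun x => by simp only [ρ, hτ x, add_comm]) (hρU i)
  refine z2Index_le_of_odd (fun x => WithLp.toLp 2 fun i => γ i x) (by fun_prop)
    (fun x hx => ?_) fun x => by ext i; simp [hγτ]
  obtain ⟨i, hi⟩ := φ.exists_pos (mem_univ x)
  have hρpos : 0 < ρ i x := add_pos_of_pos_of_nonneg hi (φ.nonneg i _)
  have hγi : γ i x = 0 := by simpa using congrArg (· i) hx
  exact hρpos.ne' (abs_eq_zero.mp (by rw [← hγρ, hγi, abs_zero]))

end Free

section Main

variable {M : Type*} [TopologicalSpace M] {τ : M → M}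

theorem secat_involQuotMk_eq_z2Index_add_one [T2Space M] [NormalSpace M] [Nonempty M]
    (hτc : Continuous τ) (hτ : Function.Involutive τ) (hfree : ∀ x, τ x ≠ x) :
    secat (involQuotMk τ) = z2Index τ + 1 := by
  refine le_antisymm ?_ ?_
  · rcases eq_or_ne (z2Index τ) ⊤ with htop | htop
    · simp [htop]
    obtain ⟨k, hk, g, hg, hgτ⟩ := exists_equivariant_of_z2Index_ne_top htop
    exact hk ▸ secat_le_of_equivariant hτc hτ g hg hgτ
  · rcases eq_or_ne (secat (involQuotMk τ)) ⊤ with htop | htop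
    · simp [htop]
    obtain ⟨k, hk, U, hU, hcov, hsec⟩ := exists_cover_of_secat_ne_top htop
    obtain ⟨x⟩ := ‹Nonempty M›
    obtain ⟨j, rfl⟩ : ∃ j, k = j + 1 := Nat.exists_eq_add_one.mpr <| Nat.pos_of_ne_zero
      fun hk0 => by
        subst hk0
        have hx : involQuotMk τ x ∈ ⋃ i, U i := hcov ▸ mem_univ _
        simp at hx
    rw [hk]
    push_cast
    gcongr
    exact z2Index_le_of_cover hτc hτ hfree U hU hcov hsec

theorem borsukUlamProperty_of_le_z2Index [Nonempty M] (hτc : Continuous τ)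
    (hτ : Function.Involutive τ) {m : ℕ} (hm : (m : ℕ∞) ≤ z2Index τ) :
    BorsukUlamProperty M τ (EuclideanSpace ℝ (Fin m)) := by
  intro f hf
  rcases m with _ | k
  · exact ⟨Classical.arbitrary M, Subsingleton.elim _ _⟩
  by_contra! hne
  have hle := z2Index_le_of_odd (τ := τ) (fun x => f x - f (τ x)) (hf.sub (hf.comp hτc))
    (fun x => sub_ne_zero.mpr (hne x).symm) fun x => by simp [hτ x]
  have := ENat.natCast_le_natCast.mp (hm.trans hle)
  omega

end Main

theorem stmt_17_general (m : ℕ) {M : Type*} [TopologicalSpace M] [T2Space M] [ConnectedSpace M]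
    (S : CWStructure M)
    (τ : M → M) (hτc : Continuous τ) (hτinv : Function.Involutive τ)
    (hτfree : ∀ x, τ x ≠ x)
    (h : secat (involQuotMk τ) = (m : ℕ∞) + 1) :
    z2Index τ = (m : ℕ∞) ∧
    BorsukUlamProperty M τ (EuclideanSpace ℝ (Fin m)) := by
  have := S.normalSpace
  have hindex : z2Index τ = m := by
    simpa [h] using (secat_involQuotMk_eq_z2Index_add_one hτc hτinv hτfree).symm
  exact ⟨hindex, borsukUlamProperty_of_le_z2Index hτc hτinv hindex.ge⟩

/-- for a connected `m`-dimensional CW complex `M` with free cellular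
involution `τ`, if `secat (q : M → M/τ) = m + 1` then the `ℤ/2`-index of `(M,τ)` is `m`;
that is, `((M,τ);ℝᵐ)` satisfies the BUP. -/
theorem stmt_17 (m : ℕ) {M : Type*} [TopologicalSpace M] [T2Space M] [ConnectedSpace M]
    (S : CWStructure M) (hdim : S.DimEq m)
    (τ : M → M) (hτc : Continuous τ) (hτinv : Function.Involutive τ)
    (hτfree : ∀ x, τ x ≠ x) (hτcell : S.Cellular τ)
    (h : secat (involQuotMk τ) = (m : ℕ∞) + 1) :
    z2Index τ = (m : ℕ∞) ∧
    BorsukUlamProperty M τ (EuclideanSpace ℝ (Fin m)) :=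
  stmt_17_general m S τ hτc hτinv hτfree h
end
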